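/- arXiv:2306.02989 — 2 statements merged into one kernel-verified Lean document; each statement's English description precedes it below -/
import Mathlib

section
/- Let p be a prime, α ∈ ℤ/pℤ \ {0,1}, G a group, X a conjugacy class of G generating G, and φ : ℤ/pℤ → X a bijection satisfying φ(i)φ(j)φ(i)⁻¹ = φ((1−α)i + αj) for all i, j ∈ ℤ/pℤ. Set g₀ = φ(0) and γ = φ(0)φ(1)⁻¹. Let k be a field of characteristic p, let J ⊆ kG be the two-sided ideal generated by γ − 1, and let V be a kG-module generated by a vector v₀ with g₀ · v₀ = λ v₀ for some λ ∈ k. Denote by ᾱ ∈ k the image of α under the ring homomorphism ℤ/pℤ → k. Then for all 0 ≤ j ≤ p − 1: (i) J^j V = kG · ((γ − 1)^j v₀) and J^j V = k(γ − 1)^j v₀ + J^{j+1} V; and (ii) g₀ · ((γ − 1)^j v₀) − λ ᾱ^j (γ − 1)^j v₀ ∈ J^{j+1} V. -/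
/-!
Applying the rack identity to `(x, y)` and to `(y, x)` shows that `i ↦ (φ (i - e))⁻¹ * φ i` has
period `(1 - α⁻¹) e`, hence is constant. So `τ d = φ d * (φ 0)⁻¹` is a homomorphism on `ℤ/pℤ`
with image `⟨γ⟩` (`γ = τ (-1)`), on which conjugation by `φ a` acts as `τ d ↦ τ (α d)`. Therefore
`⟨γ⟩` is normal and `G = ⟨γ⟩⟨g₀⟩`.

In `kG`, `g γ g⁻¹ = γ ^ m` gives `g c = c (1 + γ + ⋯ + γ ^ (m - 1)) g` for `c = γ - 1`, so
`c kG = kG c`. Hence `J = kG c` and `J ^ j V = kG c ^ j v₀`. Because `g₀` scales `v₀` and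
`γ ≡ 1 mod c`, `V = k v₀ + c V`, and this splits `k c ^ j v₀` off `kG c ^ j v₀`. For (ii),
`g₀ c = c s g₀` where `s = 1 + γ + ⋯ + γ ^ (α - 1) ≡ α mod c`, so
`g₀ c ^ j v₀ = λ c ^ j s ^ j v₀ ≡ λ α ^ j c ^ j v₀`.
-/

/-- The subspace `N V` of a module `V` spanned by products `a • v` with `a` in a subspace `N`
of the acting algebra. -/
def subSMul12 {k : Type*} [CommSemiring k] {A : Type*} [Semiring A] [Algebra k A]
    {V : Type*} [AddCommMonoid V] [Module k V] [Module A V] [IsScalarTower k A V]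
    (N : Submodule k A) : Submodule k V :=
  Submodule.span k {w : V | ∃ a ∈ N, ∃ v : V, w = a • v}

theorem ZMod.eq_of_periodic {p : ℕ} [Fact p.Prime] {β : Type*} {f : ZMod p → β} {δ : ZMod p}
    (hf : Function.Periodic f δ) (hδ : δ ≠ 0) (i j : ZMod p) : f i = f j := by
  have h := hf.nsmul ((j - i) / δ).val i
  rw [nsmul_eq_mul, ZMod.natCast_zmod_val, div_mul_cancel₀ _ hδ, add_sub_cancel] at h
  exact h.symm

def IsAffineRackHom {p : ℕ} {G : Type*} [Group G] (α : ZMod p) (φ : ZMod p → G) : Prop :=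
  ∀ i j : ZMod p, φ i * φ j * (φ i)⁻¹ = φ ((1 - α) * i + α * j)

def affineTranslation {p : ℕ} {G : Type*} [Group G] (φ : ZMod p → G) (d : ZMod p) : G :=
  φ d * (φ 0)⁻¹

namespace IsAffineRackHom

variable {p : ℕ} {G : Type*} [Group G] {α : ZMod p} {φ : ZMod p → G}

local notation "τ" => affineTranslation φ

lemma mul_inv_eq_inv_act_mul (h : IsAffineRackHom α φ) (x y : ZMod p) :
    φ x * (φ y)⁻¹ = (φ ((1 - α) * x + α * y))⁻¹ * φ x := by
  rw [← h x y]; group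

lemma mul_inv_eq_inv_mul_act (h : IsAffineRackHom α φ) (x y : ZMod p) :
    φ x * (φ y)⁻¹ = (φ y)⁻¹ * φ ((1 - α) * y + α * x) := by
  rw [← h y x]; group

variable [Fact p.Prime]

lemma inv_mul_periodic (h : IsAffineRackHom α φ) (hα0 : α ≠ 0) (e : ZMod p) :
    Function.Periodic (fun i ↦ (φ (i - e))⁻¹ * φ i) ((1 - α⁻¹) * e) := by
  intro i
  have h₁ := h.mul_inv_eq_inv_act_mul i (i - α⁻¹ * e)
  have h₂ := h.mul_inv_eq_inv_mul_act i (i - α⁻¹ * e)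
  rw [show (1 - α) * i + α * (i - α⁻¹ * e) = i - e by field_simp; ring] at h₁
  rw [show (1 - α) * (i - α⁻¹ * e) + α * i = i + (1 - α⁻¹) * e by field_simp; ring] at h₂
  show (φ (i + (1 - α⁻¹) * e - e))⁻¹ * φ (i + (1 - α⁻¹) * e) = (φ (i - e))⁻¹ * φ i
  rw [show i + (1 - α⁻¹) * e - e = i - α⁻¹ * e by ring, ← h₂, h₁]

lemma inv_mul_eq_inv_mul (h : IsAffineRackHom α φ) (hα0 : α ≠ 0) (hα1 : α ≠ 1)
    (e i j : ZMod p) : (φ (i - e))⁻¹ * φ i = (φ (j - e))⁻¹ * φ j := by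
  rcases eq_or_ne e 0 with rfl | he
  · simp
  have hδ : (1 - α⁻¹) * e ≠ 0 := mul_ne_zero (sub_ne_zero.2 (inv_ne_one.2 hα1).symm) he
  exact ZMod.eq_of_periodic (h.inv_mul_periodic hα0 e) hδ i j

lemma mul_inv_sub (h : IsAffineRackHom α φ) (hα0 : α ≠ 0) (hα1 : α ≠ 1) (i d : ZMod p) :
    φ i * (φ (i - d))⁻¹ = τ d := by
  rw [affineTranslation, h.mul_inv_eq_inv_act_mul, h.mul_inv_eq_inv_act_mul d 0]
  have := h.inv_mul_eq_inv_mul hα0 hα1 (α * d) i d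
  rwa [show i - α * d = (1 - α) * i + α * (i - d) by ring,
    show d - α * d = (1 - α) * d + α * 0 by ring] at this

lemma translation_add (h : IsAffineRackHom α φ) (hα0 : α ≠ 0) (hα1 : α ≠ 1) (d e : ZMod p) :
    τ (d + e) = τ d * τ e := by
  rw [← h.mul_inv_sub hα0 hα1 (d + e) d, add_sub_cancel_left]
  unfold affineTranslation
  group

lemma translation_neg (h : IsAffineRackHom α φ) (hα0 : α ≠ 0) (hα1 : α ≠ 1) (d : ZMod p) :
    τ (-d) = (τ d)⁻¹ := by
  refine eq_inv_of_mul_eq_one_right ?_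
  rw [← h.translation_add hα0 hα1, add_neg_cancel, affineTranslation, mul_inv_cancel]

lemma translation_nsmul (h : IsAffineRackHom α φ) (hα0 : α ≠ 0) (hα1 : α ≠ 1) (n : ℕ)
    (d : ZMod p) : τ (n • d) = τ d ^ n := by
  induction n with
  | zero => simp [affineTranslation]
  | succ n ih => rw [succ_nsmul, h.translation_add hα0 hα1, ih, pow_succ]

lemma translation_neg_one (h : IsAffineRackHom α φ) (hα0 : α ≠ 0) (hα1 : α ≠ 1) :
    τ (-1) = φ 0 * (φ 1)⁻¹ := by
  rw [← h.mul_inv_sub hα0 hα1 0 (-1), zero_sub, neg_neg]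

lemma translation_eq_pow (h : IsAffineRackHom α φ) (hα0 : α ≠ 0) (hα1 : α ≠ 1) (d : ZMod p) :
    τ d = (φ 0 * (φ 1)⁻¹) ^ (-d).val := by
  rw [← h.translation_neg_one hα0 hα1, ← h.translation_nsmul hα0 hα1, nsmul_eq_mul,
    ZMod.natCast_zmod_val, mul_neg_one, neg_neg]

lemma conj_translation (h : IsAffineRackHom α φ) (hα0 : α ≠ 0) (hα1 : α ≠ 1) (a d : ZMod p) :
    φ a * τ d * (φ a)⁻¹ = τ (α * d) := by
  calc φ a * τ d * (φ a)⁻¹ = (φ a * φ d * (φ a)⁻¹) * (φ a * φ 0 * (φ a)⁻¹)⁻¹ := by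
        rw [affineTranslation]; group
    _ = φ ((1 - α) * a + α * d) * (φ ((1 - α) * a + α * d - α * d))⁻¹ := by
        rw [h, h, add_sub_cancel_right, mul_zero, add_zero]
    _ = τ (α * d) := h.mul_inv_sub hα0 hα1 _ _

lemma exists_conj_translation (h : IsAffineRackHom α φ) (hα0 : α ≠ 0) (hα1 : α ≠ 1)
    (hgen : Subgroup.closure (Set.range φ) = ⊤) (g : G) (d : ZMod p) :
    ∃ e, g * τ d * g⁻¹ = τ e := by
  induction (hgen ▸ Subgroup.mem_top g : g ∈ Subgroup.closure (Set.range φ)) using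
    Subgroup.closure_induction'' generalizing d with
  | mem _ ha =>
    obtain ⟨a, rfl⟩ := ha
    exact ⟨α * d, h.conj_translation hα0 hα1 a d⟩
  | inv_mem _ ha =>
    obtain ⟨a, rfl⟩ := ha
    have := h.conj_translation hα0 hα1 a (α⁻¹ * d)
    rw [mul_inv_cancel_left₀ hα0] at this
    exact ⟨α⁻¹ * d, by rw [← this]; group⟩
  | one => exact ⟨d, by group⟩
  | mul x y _ _ hx hy =>
    obtain ⟨e, he⟩ := hy d
    obtain ⟨f, hf⟩ := hx e
    exact ⟨f, by rw [← hf, ← he]; group⟩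

lemma exists_eq_translation_mul_zpow (h : IsAffineRackHom α φ) (hα0 : α ≠ 0) (hα1 : α ≠ 1)
    (hgen : Subgroup.closure (Set.range φ) = ⊤) (g : G) :
    ∃ (d : ZMod p) (z : ℤ), g = τ d * φ 0 ^ z := by
  induction (hgen ▸ Subgroup.mem_top g : g ∈ Subgroup.closure (Set.range φ)) using
    Subgroup.closure_induction'' with
  | mem _ ha =>
    obtain ⟨a, rfl⟩ := ha
    exact ⟨a, 1, by rw [affineTranslation]; group⟩
  | inv_mem _ ha =>
    obtain ⟨a, rfl⟩ := ha
    obtain ⟨e, he⟩ := h.exists_conj_translation hα0 hα1 hgen (φ 0)⁻¹ (-a)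
    refine ⟨e, -1, ?_⟩
    rw [← he, h.translation_neg hα0 hα1, affineTranslation]
    group
  | one => exact ⟨0, 0, by simp [affineTranslation]⟩
  | mul x y _ _ hx hy =>
    obtain ⟨d, z, rfl⟩ := hx
    obtain ⟨e, w, rfl⟩ := hy
    obtain ⟨f, hf⟩ := h.exists_conj_translation hα0 hα1 hgen (φ 0 ^ z) e
    refine ⟨d + f, z + w, ?_⟩
    rw [h.translation_add hα0 hα1, ← hf, zpow_add]
    group

lemma exists_conj_eq_pow (h : IsAffineRackHom α φ) (hα0 : α ≠ 0) (hα1 : α ≠ 1)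
    (hgen : Subgroup.closure (Set.range φ) = ⊤) (g : G) :
    ∃ m : ℕ, g * (φ 0 * (φ 1)⁻¹) * g⁻¹ = (φ 0 * (φ 1)⁻¹) ^ m := by
  obtain ⟨e, he⟩ := h.exists_conj_translation hα0 hα1 hgen g (-1)
  rw [h.translation_neg_one hα0 hα1, h.translation_eq_pow hα0 hα1] at he
  exact ⟨_, he⟩

lemma exists_eq_pow_mul_zpow (h : IsAffineRackHom α φ) (hα0 : α ≠ 0) (hα1 : α ≠ 1)
    (hgen : Subgroup.closure (Set.range φ) = ⊤) (g : G) :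
    ∃ (m : ℕ) (z : ℤ), g = (φ 0 * (φ 1)⁻¹) ^ m * φ 0 ^ z := by
  obtain ⟨d, z, hg⟩ := h.exists_eq_translation_mul_zpow hα0 hα1 hgen g
  rw [h.translation_eq_pow hα0 hα1] at hg
  exact ⟨_, z, hg⟩

lemma conj_zero_eq_pow (h : IsAffineRackHom α φ) (hα0 : α ≠ 0) (hα1 : α ≠ 1) :
    φ 0 * (φ 0 * (φ 1)⁻¹) * (φ 0)⁻¹ = (φ 0 * (φ 1)⁻¹) ^ α.val := by
  rw [← h.translation_neg_one hα0 hα1, h.conj_translation hα0 hα1, h.translation_eq_pow hα0 hα1,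
    mul_neg_one, neg_neg, h.translation_neg_one hα0 hα1]

end IsAffineRackHom

open Polynomial

lemma X_pow_succ_dvd_X_mul_pow_sub {k : Type*} [CommRing k] (P : k[X]) (j : ℕ) :
    X ^ (j + 1) ∣ (X * P) ^ j - C (P.eval 0 ^ j) * X ^ j := by
  rw [mul_pow, C_pow, mul_comm (C _ ^ j), ← mul_sub, pow_succ]
  refine mul_dvd_mul_left _ (dvd_trans ?_ (sub_dvd_pow_sub_pow _ _ j))
  simpa [coeff_zero_eq_eval_zero] using X_dvd_sub_C (p := P)

section NormalElement

open LinearMap Submodule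

variable {k A : Type*} [CommRing k] [Ring A] [Algebra k A] {c : A}

lemma exists_mul_sub_one_eq_aeval_mul {a x : A} {m : ℕ} (h : a * x = x ^ m * a) :
    ∃ P : k[X], P.eval 0 = m ∧ a * (x - 1) = aeval (x - 1) (X * P) * a := by
  refine ⟨∑ i ∈ Finset.range m, (X + 1) ^ i, by simp [eval_finsetSum], ?_⟩
  rw [show X * ∑ i ∈ Finset.range m, (X + 1 : k[X]) ^ i = (X + 1) ^ m - 1 by
      rw [← mul_geom_sum, add_sub_cancel_right],
    map_sub, map_pow, map_add, aeval_X, map_one, sub_add_cancel, sub_mul, one_mul, mul_sub,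
    mul_one, h]

lemma exists_pow_mul_eq_mul_pow (hl : ∀ a : A, ∃ b, c * a = b * c) (j : ℕ) (a : A) :
    ∃ b, c ^ j * a = b * c ^ j := by
  induction j generalizing a with
  | zero => exact ⟨a, by simp⟩
  | succ j ih =>
    obtain ⟨b, hb⟩ := hl a
    obtain ⟨b', hb'⟩ := ih b
    exact ⟨b', by rw [pow_succ, mul_assoc, hb, ← mul_assoc, hb', mul_assoc]⟩

lemma exists_mul_pow_eq_pow_mul (hr : ∀ a : A, ∃ b, a * c = c * b) (j : ℕ) (a : A) :
    ∃ b, a * c ^ j = c ^ j * b := by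
  induction j generalizing a with
  | zero => exact ⟨a, by simp⟩
  | succ j ih =>
    obtain ⟨b, hb⟩ := hr a
    obtain ⟨b', hb'⟩ := ih b
    exact ⟨b', by rw [pow_succ', ← mul_assoc, hb, mul_assoc, hb', ← mul_assoc]⟩

lemma range_mulRight_isTwoSided (hl : ∀ a : A, ∃ b, c * a = b * c) :
    ∀ x ∈ range (mulRight k c), ∀ a : A,
      a * x ∈ range (mulRight k c) ∧ x * a ∈ range (mulRight k c) := by
  rintro _ ⟨b, rfl⟩ a
  obtain ⟨b', hb'⟩ := hl a
  exact ⟨⟨a * b, by simp [mul_assoc]⟩, ⟨b * b', by simp [mul_assoc, hb']⟩⟩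

lemma pow_le_range_mulRight_pow (hl : ∀ a : A, ∃ b, c * a = b * c) {J : Submodule k A}
    (hJ : J ≤ range (mulRight k c)) (j : ℕ) : J ^ j ≤ range (mulRight k (c ^ j)) := by
  induction j with
  | zero => exact one_le.2 ⟨1, by simp⟩
  | succ j ih =>
    rw [pow_succ, mul_le]
    rintro _ hx _ hy
    obtain ⟨a, rfl⟩ := ih hx
    obtain ⟨b, rfl⟩ := hJ hy
    obtain ⟨b', hb'⟩ := exists_pow_mul_eq_mul_pow hl j b
    refine ⟨a * b', ?_⟩
    simp only [mulRight_apply, pow_succ, mul_assoc]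
    rw [← mul_assoc (c ^ j) b, hb', mul_assoc]

variable {V : Type*} [AddCommGroup V] [Module k V] [Module A V] [IsScalarTower k A V] {v₀ : V}

lemma subSMul12_pow_eq_span (hl : ∀ a : A, ∃ b, c * a = b * c)
    (hr : ∀ a : A, ∃ b, a * c = c * b) {J : Submodule k A} (hJ : J ≤ range (mulRight k c))
    (hc : c ∈ J) (hcyc : span A {v₀} = ⊤) (j : ℕ) :
    subSMul12 (V := V) (J ^ j) = (span A {c ^ j • v₀}).restrictScalars k := by
  apply le_antisymm
  · rw [subSMul12, span_le]
    rintro _ ⟨x, hx, v, rfl⟩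
    obtain ⟨a, rfl⟩ := pow_le_range_mulRight_pow hl hJ j hx
    obtain ⟨b, rfl⟩ := mem_span_singleton.1 (hcyc ▸ mem_top : v ∈ span A {v₀})
    obtain ⟨b', hb'⟩ := exists_pow_mul_eq_mul_pow hl j b
    rw [mulRight_apply, smul_smul, mul_assoc, hb', ← mul_assoc, mul_smul]
    exact smul_mem _ _ (mem_span_singleton_self _)
  · intro w hw
    obtain ⟨a, rfl⟩ := mem_span_singleton.1 hw
    obtain ⟨b, hb⟩ := exists_mul_pow_eq_pow_mul hr j a
    rw [smul_smul, hb, mul_smul]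
    exact subset_span ⟨c ^ j, pow_mem_pow _ hc j, b • v₀, rfl⟩

lemma span_pow_smul_eq_sup (hl : ∀ a : A, ∃ b, c * a = b * c)
    (hr : ∀ a : A, ∃ b, a * c = c * b)
    (hcV : ∀ a : A, ∃ (μ : k) (d : A), a • v₀ = μ • v₀ + (c * d) • v₀) (j : ℕ) :
    (span A {c ^ j • v₀}).restrictScalars k =
      span k {c ^ j • v₀} ⊔ (span A {c ^ (j + 1) • v₀}).restrictScalars k := by
  apply le_antisymm
  · intro w hw
    obtain ⟨a, rfl⟩ := mem_span_singleton.1 hw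
    obtain ⟨b, hb⟩ := exists_mul_pow_eq_pow_mul hr j a
    obtain ⟨μ, d, hd⟩ := hcV b
    obtain ⟨d', hd'⟩ := exists_pow_mul_eq_mul_pow hl (j + 1) d
    have : a • c ^ j • v₀ = μ • c ^ j • v₀ + d' • c ^ (j + 1) • v₀ := by
      rw [smul_smul, hb, mul_smul, hd, smul_add, smul_comm, ← mul_smul, ← mul_assoc, ← pow_succ,
        hd', mul_smul]
    rw [this]
    exact add_mem (mem_sup_left (smul_mem _ _ (mem_span_singleton_self _)))
      (mem_sup_right (smul_mem _ _ (mem_span_singleton_self _)))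
  · refine sup_le (span_le.2 (by simp))
      (restrictScalars_mono k (span_le.2 ?_))
    rw [Set.singleton_subset_iff, pow_succ', mul_smul]
    exact smul_mem _ _ (mem_span_singleton_self _)

lemma smul_pow_smul_sub_mem_span {x : A} {P : k[X]} (hx : x * c = aeval c (X * P) * x)
    {lam : k} (hv₀ : x • v₀ = lam • v₀) (j : ℕ) :
    x • c ^ j • v₀ - (lam * P.eval 0 ^ j) • c ^ j • v₀ ∈ span A {c ^ (j + 1) • v₀} := by
  obtain ⟨Q, hQ⟩ := X_pow_succ_dvd_X_mul_pow_sub P j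
  have hxj : x * c ^ j = aeval c ((X * P) ^ j) * x := by
    simpa using (SemiconjBy.pow_right hx j).eq
  rw [sub_eq_iff_eq_add'.1 hQ, mul_comm _ Q] at hxj
  have : x • c ^ j • v₀ =
      (lam * P.eval 0 ^ j) • c ^ j • v₀ + (lam • aeval c Q) • c ^ (j + 1) • v₀ := by
    rw [← mul_smul, hxj, mul_smul, hv₀, map_add, map_mul, map_mul, aeval_C, aeval_X_pow,
      aeval_X_pow, ← Algebra.smul_def, add_smul, smul_assoc, mul_smul, smul_comm _ lam,
      smul_comm _ lam, mul_smul, smul_assoc, smul_comm (c ^ (j + 1)) lam,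
      smul_comm (aeval c Q) lam]
  rw [this, add_sub_cancel_left]
  exact smul_mem _ _ (mem_span_singleton_self _)

end NormalElement

section GroupAlgebra

open MonoidAlgebra

variable {k G : Type*} [CommRing k] [Group G]

lemma MonoidAlgebra.exists_eq_of_forall_of {M : Type*} [AddCommMonoid M] [Module k M]
    (f g : MonoidAlgebra k G →ₗ[k] M) (h : ∀ x : G, ∃ y, f (of k G x) = g y)
    (a : MonoidAlgebra k G) : ∃ b, f a = g b := by
  induction a using MonoidAlgebra.induction_on with
  | of x => exact h x
  | add a a' ha ha' =>
    obtain ⟨b, hb⟩ := ha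
    obtain ⟨b', hb'⟩ := ha'
    exact ⟨b + b', by rw [map_add, map_add, hb, hb']⟩
  | smul r a ha =>
    obtain ⟨b, hb⟩ := ha
    exact ⟨r • b, by rw [map_smul, map_smul, hb]⟩

lemma of_mul_of_eq_pow_mul {g γ : G} {m : ℕ} (h : g * γ * g⁻¹ = γ ^ m) :
    of k G g * of k G γ = of k G γ ^ m * of k G g := by
  rw [← map_mul, ← map_pow, ← map_mul, ← h, inv_mul_cancel_right]

variable {γ : G}

lemma exists_mul_eq_sub_one_mul (hconj : ∀ g : G, ∃ m : ℕ, g * γ * g⁻¹ = γ ^ m)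
    (a : MonoidAlgebra k G) : ∃ b, a * (of k G γ - 1) = (of k G γ - 1) * b := by
  refine MonoidAlgebra.exists_eq_of_forall_of (LinearMap.mulRight k _) (LinearMap.mulLeft k _)
    (fun g ↦ ?_) a
  obtain ⟨m, hm⟩ := hconj g
  obtain ⟨P, -, hP⟩ := exists_mul_sub_one_eq_aeval_mul (k := k) (of_mul_of_eq_pow_mul (k := k) hm)
  refine ⟨Polynomial.aeval (of k G γ - 1) P * of k G g, ?_⟩
  rw [LinearMap.mulRight_apply, LinearMap.mulLeft_apply, hP, map_mul, Polynomial.aeval_X,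
    mul_assoc]

lemma exists_sub_one_mul_eq_mul (hconj : ∀ g : G, ∃ m : ℕ, g * γ * g⁻¹ = γ ^ m)
    (a : MonoidAlgebra k G) : ∃ b, (of k G γ - 1) * a = b * (of k G γ - 1) := by
  refine MonoidAlgebra.exists_eq_of_forall_of (LinearMap.mulLeft k _) (LinearMap.mulRight k _)
    (fun g ↦ ?_) a
  obtain ⟨m, hm⟩ := hconj g⁻¹
  obtain ⟨P, -, hP⟩ := exists_mul_sub_one_eq_aeval_mul (k := k) (of_mul_of_eq_pow_mul (k := k) hm)
  refine ⟨of k G g * Polynomial.aeval (of k G γ - 1) P, ?_⟩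
  rw [Polynomial.X_mul, map_mul, Polynomial.aeval_X] at hP
  have hinv : of k G g⁻¹ * of k G g = 1 := by rw [← map_mul, inv_mul_cancel, map_one]
  calc (of k G γ - 1) * of k G g = of k G g * (of k G g⁻¹ * (of k G γ - 1)) * of k G g := by
        rw [← mul_assoc, ← map_mul, mul_inv_cancel, map_one, one_mul]
    _ = _ := by rw [hP, LinearMap.mulRight_apply]; simp only [mul_assoc, hinv, mul_one]

end GroupAlgebra

section Eigenvector

open MonoidAlgebra

variable {k G : Type*} [Field k] [Group G] {V : Type*} [AddCommGroup V] [Module k V]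
  [Module (MonoidAlgebra k G) V] [IsScalarTower k (MonoidAlgebra k G) V]

lemma of_inv_smul_of_smul_eq {g : G} {v : V} {μ : k} (h : of k G g • v = μ • v) :
    of k G g⁻¹ • v = μ⁻¹ • v := by
  have hv : of k G g⁻¹ • μ • v = v := by
    rw [← h, ← mul_smul, ← map_mul, inv_mul_cancel, map_one, one_smul]
  rcases eq_or_ne μ 0 with rfl | hμ
  · rw [zero_smul, smul_zero] at hv
    simp [← hv]
  · calc of k G g⁻¹ • v = μ⁻¹ • μ • of k G g⁻¹ • v := (inv_smul_smul₀ hμ _).symm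
      _ = μ⁻¹ • v := by rw [← smul_comm (of k G g⁻¹) μ v, hv]

lemma of_zpow_smul_of_smul_eq {g : G} {v : V} {μ : k} (h : of k G g • v = μ • v) (z : ℤ) :
    of k G (g ^ z) • v = μ ^ z • v := by
  have hpow (n : ℕ) : of k G (g ^ n) • v = μ ^ n • v := by
    induction n with
    | zero => rw [pow_zero, map_one, one_smul, pow_zero, one_smul]
    | succ n ih => rw [pow_succ, map_mul, mul_smul, h, smul_comm, ih, smul_smul, pow_succ']
  cases z with
  | ofNat n => rw [Int.ofNat_eq_natCast, zpow_natCast, zpow_natCast, hpow]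
  | negSucc n => rw [zpow_negSucc, zpow_negSucc, of_inv_smul_of_smul_eq (hpow (n + 1))]

lemma exists_smul_eq_smul_add_sub_one_mul_smul {γ g₀ : G}
    (hdecomp : ∀ g : G, ∃ (m : ℕ) (z : ℤ), g = γ ^ m * g₀ ^ z) {v₀ : V} {lam : k}
    (hv₀ : of k G g₀ • v₀ = lam • v₀) (a : MonoidAlgebra k G) :
    ∃ (μ : k) (d : MonoidAlgebra k G), a • v₀ = μ • v₀ + ((of k G γ - 1) * d) • v₀ := by
  induction a using MonoidAlgebra.induction_on with
  | of g =>
    obtain ⟨m, z, rfl⟩ := hdecomp g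
    refine ⟨lam ^ z, lam ^ z • ∑ i ∈ Finset.range m, of k G γ ^ i, ?_⟩
    rw [map_mul, mul_smul, of_zpow_smul_of_smul_eq hv₀, mul_smul_comm, smul_assoc, ← smul_add,
      mul_geom_sum, sub_smul, one_smul, add_sub_cancel, map_pow, smul_comm]
  | add a a' ha ha' =>
    obtain ⟨μ, d, hd⟩ := ha
    obtain ⟨μ', d', hd'⟩ := ha'
    exact ⟨μ + μ', d + d', by rw [add_smul, hd, hd', mul_add, add_smul, add_smul]; abel⟩
  | smul r a ha =>
    obtain ⟨μ, d, hd⟩ := ha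
    exact ⟨r * μ, r • d, by rw [smul_assoc, hd, smul_add, mul_smul_comm, smul_assoc, smul_smul]⟩

end Eigenvector

theorem stmt12_general {k : Type*} [Field k] {G : Type*} [Group G]
    (p : ℕ) (hp : p.Prime) [CharP k p]
    (α : ZMod p) (hα0 : α ≠ 0) (hα1 : α ≠ 1)
    (φ : ZMod p → G)
    (hXgen : Subgroup.closure (Set.range φ) = ⊤)
    (hrack : ∀ i j : ZMod p, φ i * φ j * (φ i)⁻¹ = φ ((1 - α) * i + α * j))
    -- J is the two-sided ideal of kG generated by γ - 1
    (J : Submodule k (MonoidAlgebra k G))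
    (hJmem : MonoidAlgebra.of k G (φ 0 * (φ 1)⁻¹) - 1 ∈ J)
    (hJmin : ∀ I : Submodule k (MonoidAlgebra k G),
      MonoidAlgebra.of k G (φ 0 * (φ 1)⁻¹) - 1 ∈ I →
      (∀ x ∈ I, ∀ a : MonoidAlgebra k G, a * x ∈ I ∧ x * a ∈ I) → J ≤ I)
    -- V is a kG-module generated by v₀, with g₀ • v₀ = λ v₀
    {V : Type*} [AddCommGroup V] [Module k V] [Module (MonoidAlgebra k G) V]
    [IsScalarTower k (MonoidAlgebra k G) V]
    (v₀ : V) (hcyc : Submodule.span (MonoidAlgebra k G) {v₀} = ⊤)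
    (lam : k) (hv₀ : MonoidAlgebra.of k G (φ 0) • v₀ = lam • v₀) :
    ∀ j : ℕ, j ≤ p - 1 →
      (subSMul12 (V := V) (J ^ j) =
        Submodule.restrictScalars k (Submodule.span (MonoidAlgebra k G)
          {(MonoidAlgebra.of k G (φ 0 * (φ 1)⁻¹) - 1) ^ j • v₀})) ∧
      (subSMul12 (V := V) (J ^ j) =
        Submodule.span k {(MonoidAlgebra.of k G (φ 0 * (φ 1)⁻¹) - 1) ^ j • v₀} ⊔
          subSMul12 (V := V) (J ^ (j + 1))) ∧
      (MonoidAlgebra.of k G (φ 0) • ((MonoidAlgebra.of k G (φ 0 * (φ 1)⁻¹) - 1) ^ j • v₀) -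
          (lam * (ZMod.castHom (dvd_refl p) k α) ^ j) •
            ((MonoidAlgebra.of k G (φ 0 * (φ 1)⁻¹) - 1) ^ j • v₀)
        ∈ subSMul12 (V := V) (J ^ (j + 1))) := by
  have : Fact p.Prime := ⟨hp⟩
  have h : IsAffineRackHom α φ := hrack
  have hconj := h.exists_conj_eq_pow hα0 hα1 hXgen
  have hl := exists_sub_one_mul_eq_mul (k := k) hconj
  have hr := exists_mul_eq_sub_one_mul (k := k) hconj
  have hspan := subSMul12_pow_eq_span hl hr
    (hJmin _ ⟨1, one_mul _⟩ (range_mulRight_isTwoSided hl)) hJmem hcyc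
  have hcV := exists_smul_eq_smul_add_sub_one_mul_smul (h.exists_eq_pow_mul_zpow hα0 hα1 hXgen) hv₀
  obtain ⟨P, hP0, hP⟩ := exists_mul_sub_one_eq_aeval_mul (k := k)
    (of_mul_of_eq_pow_mul (k := k) (h.conj_zero_eq_pow hα0 hα1))
  have hα : ZMod.castHom (dvd_refl p) k α = P.eval 0 := by
    rw [hP0, ZMod.castHom_apply, ZMod.natCast_val]
  intro j _
  refine ⟨hspan j, by rw [hspan, hspan, span_pow_smul_eq_sup hl hr hcV], ?_⟩
  rw [hspan, hα]
  exact smul_pow_smul_sub_mem_span hP hv₀ j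

/-- Let `p` be a prime, `α ∈ ℤ/pℤ \ {0,1}`, `G` a group, `X` a conjugacy class of
`G` generating `G`, and `φ : ℤ/pℤ → X` a bijection with `φ(i)φ(j)φ(i)⁻¹ = φ((1−α)i + αj)`.
Set `g₀ = φ(0)`, `γ = φ(0)φ(1)⁻¹`. Let `k` be a field of characteristic `p`, `J ⊆ kG` the
two-sided ideal generated by `γ − 1`, and `V` a `kG`-module generated by `v₀` with
`g₀ · v₀ = λ v₀`. Let `ᾱ ∈ k` be the image of `α`. Then for all `0 ≤ j ≤ p − 1`:
(i) `J^j V = kG·((γ−1)^j v₀)` and `J^j V = k(γ−1)^j v₀ + J^{j+1} V`;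
(ii) `g₀·((γ−1)^j v₀) − λ ᾱ^j (γ−1)^j v₀ ∈ J^{j+1} V`. -/
theorem stmt12 {k : Type*} [Field k] {G : Type*} [Group G]
    (p : ℕ) (hp : p.Prime) [CharP k p]
    (α : ZMod p) (hα0 : α ≠ 0) (hα1 : α ≠ 1)
    (φ : ZMod p → G) (hφinj : Function.Injective φ)
    (hXconj : ∃ x : G, Set.range φ = {y | IsConj x y})
    (hXgen : Subgroup.closure (Set.range φ) = ⊤)
    (hrack : ∀ i j : ZMod p, φ i * φ j * (φ i)⁻¹ = φ ((1 - α) * i + α * j))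
    -- J is the two-sided ideal of kG generated by γ - 1
    (J : Submodule k (MonoidAlgebra k G))
    (hJmem : MonoidAlgebra.of k G (φ 0 * (φ 1)⁻¹) - 1 ∈ J)
    (hJ2 : ∀ x ∈ J, ∀ a : MonoidAlgebra k G, a * x ∈ J ∧ x * a ∈ J)
    (hJmin : ∀ I : Submodule k (MonoidAlgebra k G),
      MonoidAlgebra.of k G (φ 0 * (φ 1)⁻¹) - 1 ∈ I →
      (∀ x ∈ I, ∀ a : MonoidAlgebra k G, a * x ∈ I ∧ x * a ∈ I) → J ≤ I)
    -- V is a kG-module generated by v₀, with g₀ • v₀ = λ v₀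
    {V : Type*} [AddCommGroup V] [Module k V] [Module (MonoidAlgebra k G) V]
    [IsScalarTower k (MonoidAlgebra k G) V]
    (v₀ : V) (hcyc : Submodule.span (MonoidAlgebra k G) {v₀} = ⊤)
    (lam : k) (hv₀ : MonoidAlgebra.of k G (φ 0) • v₀ = lam • v₀) :
    ∀ j : ℕ, j ≤ p - 1 →
      (subSMul12 (V := V) (J ^ j) =
        Submodule.restrictScalars k (Submodule.span (MonoidAlgebra k G)
          {(MonoidAlgebra.of k G (φ 0 * (φ 1)⁻¹) - 1) ^ j • v₀})) ∧
      (subSMul12 (V := V) (J ^ j) =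
        Submodule.span k {(MonoidAlgebra.of k G (φ 0 * (φ 1)⁻¹) - 1) ^ j • v₀} ⊔
          subSMul12 (V := V) (J ^ (j + 1))) ∧
      (MonoidAlgebra.of k G (φ 0) • ((MonoidAlgebra.of k G (φ 0 * (φ 1)⁻¹) - 1) ^ j • v₀) -
          (lam * (ZMod.castHom (dvd_refl p) k α) ^ j) •
            ((MonoidAlgebra.of k G (φ 0 * (φ 1)⁻¹) - 1) ^ j • v₀)
        ∈ subSMul12 (V := V) (J ^ (j + 1))) :=
  stmt12_general p hp α hα0 hα1 φ hXgen hrack J hJmem hJmin v₀ hcyc lam hv₀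
end

section
/- Let k be a field, G a group, J ⊆ kG a nilpotent Hopf ideal of the group algebra kG, and V a Yetter–Drinfeld module over kG with braiding c. Then the family (J^iV)_{i≥0} is a decreasing filtration of the braided vector space (V, c): J^0V = V, J^iV ⊇ J^jV for i ≤ j, ∩_{i≥0} J^iV = 0, and c(J^iV ⊗ J^jV) ⊆ Σ_{k+l ≥ i+j} J^kV ⊗ J^lV for all i, j ≥ 0. -/
/-! For `w ∈ V_h` and `g ∈ G` the braiding is `c (g • w ⊗ v) = g h g⁻¹ • v ⊗ g • w`, so by
linearity `c (x • w ⊗ v)` is obtained from the image of `x` under `g ↦ g h g⁻¹ ⊗ g`, which only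
involves the Hopf structure: it is `x ↦ Δ(x₁) (h S(x₂) ⊗ 1)`. As `J` is a Hopf ideal, `Δ` maps
`J^i` into `∑_{p+q=i} J^p ⊗ J^q` (with `J^0 = kG`), `S` preserves each `J^q`, and
`J^p J^q ⊆ J^{p+q}`; hence for `x ∈ J^i` and `v ∈ J^j V` the element `c (x • w ⊗ v)` lies in
`∑_{p+q=i} J^{p+j} V ⊗ J^q V`. Nilpotency of `J` makes the filtration reach `0`. -/

open TensorProduct

/-- The image `P ⊗ Q` of a tensor product of two submodules inside `M ⊗[k] N`. -/
noncomputable def subTensor15 {k : Type*} [CommSemiring k] {M N : Type*}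
    [AddCommMonoid M] [Module k M] [AddCommMonoid N] [Module k N]
    (P : Submodule k M) (Q : Submodule k N) : Submodule k (M ⊗[k] N) :=
  LinearMap.range (TensorProduct.map P.subtype Q.subtype)

/-- The subspace `N V` of a module `V` spanned by products `a • v` with `a` in a subspace `N`
of the acting algebra. -/
def subSMul15 {k : Type*} [CommSemiring k] {A : Type*} [Semiring A] [Algebra k A]
    {V : Type*} [AddCommMonoid V] [Module k V] [Module A V] [IsScalarTower k A V]
    (N : Submodule k A) : Submodule k V :=
  Submodule.span k {w : V | ∃ a ∈ N, ∃ v : V, w = a • v}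

section SubTensor

variable {R M N : Type*} [CommSemiring R] [AddCommMonoid M] [Module R M] [AddCommMonoid N]
  [Module R N] {P P' : Submodule R M} {Q Q' : Submodule R N}

theorem tmul_mem_subTensor15 {u : M} {v : N} (hu : u ∈ P) (hv : v ∈ Q) :
    u ⊗ₜ[R] v ∈ subTensor15 P Q :=
  ⟨(⟨u, hu⟩ : P) ⊗ₜ[R] (⟨v, hv⟩ : Q), rfl⟩

theorem map_subTensor15_le {X : Type*} [AddCommMonoid X] [Module R X] (f : M ⊗[R] N →ₗ[R] X)
    {W : Submodule R X} (h : ∀ u ∈ P, ∀ v ∈ Q, f (u ⊗ₜ[R] v) ∈ W) :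
    (subTensor15 P Q).map f ≤ W := by
  rw [subTensor15, range_map_eq_span_tmul, Submodule.map_span_le]
  rintro _ ⟨u, v, rfl⟩
  exact h _ u.2 _ v.2

theorem subTensor15_mono (hP : P ≤ P') (hQ : Q ≤ Q') : subTensor15 P Q ≤ subTensor15 P' Q' := by
  simpa using map_subTensor15_le LinearMap.id fun u hu v hv =>
    tmul_mem_subTensor15 (hP hu) (hQ hv)

theorem subTensor15_top_top : subTensor15 (⊤ : Submodule R M) (⊤ : Submodule R N) = ⊤ := by
  rw [eq_top_iff, ← span_tmul_eq_top, Submodule.span_le]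
  rintro _ ⟨u, v, rfl⟩
  exact tmul_mem_subTensor15 trivial trivial

theorem subTensor15_mul_subTensor15_le {A B : Type*} [Semiring A] [Algebra R A] [Semiring B]
    [Algebra R B] (P P' : Submodule R A) (Q Q' : Submodule R B) :
    subTensor15 P Q * subTensor15 P' Q' ≤ subTensor15 (P * P') (Q * Q') := by
  simp only [subTensor15, range_map_eq_span_tmul, Submodule.span_mul_span]
  refine Submodule.span_le.2 ?_
  rintro _ ⟨_, ⟨a, b, rfl⟩, _, ⟨a', b', rfl⟩, rfl⟩
  dsimp only
  rw [Algebra.TensorProduct.tmul_mul_tmul]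
  exact Submodule.subset_span
    ⟨⟨_, Submodule.mul_mem_mul a.2 a'.2⟩, ⟨_, Submodule.mul_mem_mul b.2 b'.2⟩, rfl⟩

end SubTensor

section IdealPow

variable {k A : Type*} [CommSemiring k] [Semiring A] [Algebra k A]

/-- `J ^ 0` is the line `k ∙ 1`, not `A`: the ideal powers of `J` start at `⊤`. -/
def idealPow (J : Submodule k A) (i : ℕ) : Submodule k A :=
  if i = 0 then ⊤ else J ^ i

variable (J : Submodule k A)

@[simp] theorem idealPow_zero : idealPow J 0 = ⊤ := if_pos rfl

@[simp] theorem idealPow_succ (m : ℕ) : idealPow J (m + 1) = J ^ (m + 1) :=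
  if_neg m.succ_ne_zero

theorem pow_le_idealPow (i : ℕ) : J ^ i ≤ idealPow J i := by
  cases i <;> simp

variable {J} (hJ : ∀ x ∈ J, ∀ a : A, a * x ∈ J ∧ x * a ∈ J)
include hJ

theorem top_mul_pow_succ_le (m : ℕ) : ⊤ * J ^ (m + 1) ≤ J ^ (m + 1) :=
  calc ⊤ * J ^ (m + 1) = ⊤ * J * J ^ m := by rw [pow_succ', mul_assoc]
    _ ≤ J * J ^ m := mul_le_mul' (Submodule.mul_le.2 fun a _ x hx => (hJ x hx a).1) le_rfl
    _ = J ^ (m + 1) := (pow_succ' J m).symm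

theorem pow_succ_mul_top_le (m : ℕ) : J ^ (m + 1) * ⊤ ≤ J ^ (m + 1) :=
  calc J ^ (m + 1) * ⊤ = J ^ m * (J * ⊤) := by rw [pow_succ, mul_assoc]
    _ ≤ J ^ m * J := mul_le_mul' le_rfl (Submodule.mul_le.2 fun x hx a _ => (hJ x hx a).2)
    _ = J ^ (m + 1) := (pow_succ J m).symm

theorem idealPow_mul_le : ∀ p q : ℕ, idealPow J p * idealPow J q ≤ idealPow J (p + q)
  | 0, 0 => le_top
  | 0, q + 1 => by simpa using top_mul_pow_succ_le hJ q
  | p + 1, 0 => by simpa using pow_succ_mul_top_le hJ p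
  | p + 1, q + 1 => by
    rw [idealPow_succ, idealPow_succ, ← pow_add]
    exact pow_le_idealPow J _

theorem idealPow_antitone : Antitone (idealPow J) := by
  refine antitone_nat_of_succ_le fun n => ?_
  cases n with
  | zero => exact le_top
  | succ m =>
    rw [idealPow_succ, idealPow_succ, pow_succ _ (m + 1)]
    exact (mul_le_mul' le_rfl le_top).trans (pow_succ_mul_top_le hJ m)

end IdealPow

section TensorFiltration

variable {k A : Type*} [CommSemiring k] [Semiring A] [Algebra k A] {J : Submodule k A}

theorem map_idealPow_le_of_antimultiplicative {S : A →ₗ[k] A} (hS : ∀ a b, S (a * b) = S b * S a)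
    (hJS : ∀ x ∈ J, S x ∈ J) (i : ℕ) : (idealPow J i).map S ≤ idealPow J i := by
  rcases i with _ | m
  · exact le_top
  rw [idealPow_succ]
  induction m with
  | zero => rw [zero_add, pow_one, Submodule.map_le_iff_le_comap]; exact hJS
  | succ m ih =>
    refine Submodule.map_le_iff_le_comap.2 <|
      (pow_succ J (m + 1)).le.trans <| Submodule.mul_le.2 fun x hx y hy => ?_
    rw [Submodule.mem_comap, hS, pow_succ']
    exact Submodule.mul_mem_mul (hJS y hy) (ih (Submodule.mem_map_of_mem hx))

variable (J) in
noncomputable def tensorFiltration (i : ℕ) : Submodule k (A ⊗[k] A) :=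
  ⨆ pq : {pq : ℕ × ℕ // pq.1 + pq.2 = i}, subTensor15 (idealPow J pq.1.1) (idealPow J pq.1.2)

variable (J) in
theorem subTensor15_le_tensorFiltration {p q i : ℕ} (h : p + q = i) :
    subTensor15 (idealPow J p) (idealPow J q) ≤ tensorFiltration J i :=
  le_iSup_of_le ⟨(p, q), h⟩ le_rfl

variable (J) in
@[simp] theorem tensorFiltration_zero : tensorFiltration J 0 = ⊤ := by
  simpa [subTensor15_top_top] using subTensor15_le_tensorFiltration J (zero_add 0)

theorem tensorFiltration_mul_le (hJ : ∀ x ∈ J, ∀ a : A, a * x ∈ J ∧ x * a ∈ J) (p q : ℕ) :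
    tensorFiltration J p * tensorFiltration J q ≤ tensorFiltration J (p + q) := by
  simp only [tensorFiltration, Submodule.iSup_mul, Submodule.mul_iSup]
  refine iSup_le fun ⟨⟨q₁, q₂⟩, hq⟩ => iSup_le fun ⟨⟨p₁, p₂⟩, hp⟩ => ?_
  calc _ ≤ subTensor15 (idealPow J p₁ * idealPow J q₁) (idealPow J p₂ * idealPow J q₂) :=
        subTensor15_mul_subTensor15_le _ _ _ _
    _ ≤ subTensor15 (idealPow J (p₁ + q₁)) (idealPow J (p₂ + q₂)) :=
        subTensor15_mono (idealPow_mul_le hJ _ _) (idealPow_mul_le hJ _ _)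
    _ ≤ tensorFiltration J (p + q) := subTensor15_le_tensorFiltration J (by omega)

theorem map_idealPow_le_tensorFiltration (hJ : ∀ x ∈ J, ∀ a : A, a * x ∈ J ∧ x * a ∈ J)
    {Δ : A →ₐ[k] A ⊗[k] A} (hJΔ : ∀ x ∈ J, Δ x ∈ subTensor15 J ⊤ ⊔ subTensor15 ⊤ J) (i : ℕ) :
    (idealPow J i).map Δ.toLinearMap ≤ tensorFiltration J i := by
  have hJ₁ : J.map Δ.toLinearMap ≤ tensorFiltration J 1 := by
    have h₁₀ := subTensor15_le_tensorFiltration J (p := 1) (q := 0) rfl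
    have h₀₁ := subTensor15_le_tensorFiltration J (p := 0) (q := 1) rfl
    simp only [idealPow_zero, zero_add, idealPow_succ, pow_one] at h₁₀ h₀₁
    exact Submodule.map_le_iff_le_comap.2 fun x hx => sup_le h₁₀ h₀₁ (hJΔ x hx)
  have hpow : ∀ n, J.map Δ.toLinearMap ^ n ≤ tensorFiltration J n := by
    intro n
    induction n with
    | zero => simp
    | succ n ih => rw [pow_succ]; exact (mul_le_mul' ih hJ₁).trans (tensorFiltration_mul_le hJ n 1)
  rcases i with _ | m
  · simp
  · rw [idealPow_succ, Submodule.map_pow]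
    exact hpow _

/-- On a group algebra it sends `Δ g = g ⊗ g` to `g h g⁻¹ ⊗ g`, the coefficient of the braiding
of `g • w ⊗ v` for `w ∈ V_h`. -/
noncomputable def braidingTensor (Δ : A →ₐ[k] A ⊗[k] A) (S : A →ₗ[k] A) (h : A) :
    A ⊗[k] A →ₗ[k] A ⊗[k] A :=
  LinearMap.mul' k (A ⊗[k] A) ∘ₗ TensorProduct.map Δ.toLinearMap
    ((Algebra.TensorProduct.includeLeft : A →ₐ[k] A ⊗[k] A).toLinearMap ∘ₗ
      LinearMap.mulLeft k h ∘ₗ S)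

@[simp] theorem braidingTensor_tmul (Δ : A →ₐ[k] A ⊗[k] A) (S : A →ₗ[k] A) (h a b : A) :
    braidingTensor Δ S h (a ⊗ₜ[k] b) = Δ a * ((h * S b) ⊗ₜ[k] 1) := by
  simp [braidingTensor]

theorem map_braidingTensor_le (hJ : ∀ x ∈ J, ∀ a : A, a * x ∈ J ∧ x * a ∈ J)
    {Δ : A →ₐ[k] A ⊗[k] A} (hJΔ : ∀ x ∈ J, Δ x ∈ subTensor15 J ⊤ ⊔ subTensor15 ⊤ J)
    {S : A →ₗ[k] A} (hS : ∀ a b, S (a * b) = S b * S a) (hJS : ∀ x ∈ J, S x ∈ J) (h : A)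
    (i : ℕ) : (tensorFiltration J i).map (braidingTensor Δ S h) ≤ tensorFiltration J i := by
  rw [tensorFiltration, Submodule.map_iSup]
  refine iSup_le fun ⟨⟨p, q⟩, hpq⟩ => map_subTensor15_le _ fun a ha b hb => ?_
  rw [braidingTensor_tmul, ← hpq]
  refine tensorFiltration_mul_le hJ p q (Submodule.mul_mem_mul ?_ ?_)
  · exact map_idealPow_le_tensorFiltration hJ hJΔ p (Submodule.mem_map_of_mem ha)
  · have hSb := map_idealPow_le_of_antimultiplicative hS hJS q (Submodule.mem_map_of_mem hb)
    have hmul := idealPow_mul_le hJ 0 q (Submodule.mul_mem_mul (Submodule.mem_top (x := h)) hSb)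
    rw [zero_add] at hmul
    exact subTensor15_le_tensorFiltration J (add_zero q)
      (tmul_mem_subTensor15 hmul (by rw [idealPow_zero]; trivial))

end TensorFiltration

section SubSMul

variable {k A V : Type*} [CommSemiring k] [Semiring A] [Algebra k A] [AddCommMonoid V]
  [Module k V] [Module A V] [IsScalarTower k A V] {N N' N'' : Submodule k A}

theorem subSMul15_mono (h : N ≤ N') : subSMul15 (V := V) N ≤ subSMul15 N' :=
  Submodule.span_mono fun _ ⟨a, ha, v, hv⟩ => ⟨a, h ha, v, hv⟩

theorem subSMul15_eq_top_of_one_mem (h : 1 ∈ N) : subSMul15 (V := V) N = ⊤ :=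
  eq_top_iff.2 fun v _ => Submodule.subset_span ⟨1, h, v, (one_smul A v).symm⟩

theorem subSMul15_bot : subSMul15 (V := V) (⊥ : Submodule k A) = ⊥ := by
  refine Submodule.span_eq_bot.2 ?_
  rintro _ ⟨a, ha, v, rfl⟩
  rw [(Submodule.mem_bot k).1 ha, zero_smul]

theorem subSMul15_idealPow (J : Submodule k A) (n : ℕ) :
    subSMul15 (V := V) (idealPow J n) = subSMul15 (J ^ n) := by
  rcases n with _ | m
  · rw [idealPow_zero, pow_zero, subSMul15_eq_top_of_one_mem Submodule.mem_top,
      subSMul15_eq_top_of_one_mem (Submodule.one_le.1 le_rfl)]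
  · rw [idealPow_succ]

theorem smul_mem_subSMul15 (h : N * N' ≤ N'') {a : A} (ha : a ∈ N) {v : V}
    (hv : v ∈ subSMul15 N') : a • v ∈ subSMul15 N'' := by
  suffices subSMul15 N' ≤ (subSMul15 N'').comap (DistribSMul.toLinearMap k V a) from this hv
  refine Submodule.span_le.2 ?_
  rintro _ ⟨b, hb, u, rfl⟩
  show a • b • u ∈ subSMul15 N''
  rw [← mul_smul]
  exact Submodule.subset_span ⟨_, h (Submodule.mul_mem_mul ha hb), u, rfl⟩

theorem subSMul15_le_comap_of_iSup_eq_top {X : Type*} [AddCommMonoid X] [Module k X]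
    {ι : Type*} {Vx : ι → Submodule k V} (hVx : ⨆ i, Vx i = ⊤) (f : V →ₗ[k] X)
    {W : Submodule k X} (hf : ∀ a ∈ N, ∀ i, ∀ w ∈ Vx i, f (a • w) ∈ W) :
    subSMul15 N ≤ W.comap f := by
  refine Submodule.span_le.2 ?_
  rintro _ ⟨a, ha, u, rfl⟩
  have hu : u ∈ ⨆ i, Vx i := hVx ▸ Submodule.mem_top
  exact (iSup_le fun i w hw => hf a ha i w hw :
    ⨆ i, Vx i ≤ W.comap (f ∘ₗ DistribSMul.toLinearMap k V a)) hu

theorem map_smul_tensorFiltration_le {J : Submodule k A}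
    (hJ : ∀ x ∈ J, ∀ a : A, a * x ∈ J ∧ x * a ∈ J) {i j : ℕ} {v : V}
    (hv : v ∈ subSMul15 (idealPow J j)) (w : V) :
    (tensorFiltration J i).map
        (TensorProduct.map (LinearMap.id.smulRight v) (LinearMap.id.smulRight w)) ≤
      ⨆ (kl : ℕ × ℕ) (_ : i + j ≤ kl.1 + kl.2),
        subTensor15 (subSMul15 (V := V) (idealPow J kl.1)) (subSMul15 (idealPow J kl.2)) := by
  rw [tensorFiltration, Submodule.map_iSup]
  refine iSup_le fun ⟨⟨p, q⟩, hpq⟩ => map_subTensor15_le _ fun a ha b hb => ?_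
  rw [TensorProduct.map_tmul]
  refine Submodule.mem_iSup_of_mem (p + j, q) <| Submodule.mem_iSup_of_mem (by omega) <|
    tmul_mem_subTensor15 (smul_mem_subSMul15 (idealPow_mul_le hJ p j) ha hv)
      (Submodule.subset_span ⟨b, hb, w, rfl⟩)

end SubSMul

namespace MonoidAlgebra

variable {k G : Type*} [CommSemiring k]

theorem map_mul_of_map_of_mul [Monoid G] {B : Type*} [Semiring B] [Algebra k B]
    (f : MonoidAlgebra k G →ₗ[k] B)
    (hf : ∀ g h : G, f (of k G (g * h)) = f (of k G g) * f (of k G h))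
    (a b : MonoidAlgebra k G) : f (a * b) = f a * f b := by
  revert a b
  rw [LinearMap.map_mul_iff]
  ext g h
  simpa using hf g h

variable [Group G]

theorem map_mul_of_map_of_eq_tmul
    (Δ : MonoidAlgebra k G →ₗ[k] MonoidAlgebra k G ⊗[k] MonoidAlgebra k G)
    (hΔ : ∀ g : G, Δ (of k G g) = of k G g ⊗ₜ[k] of k G g) (a b : MonoidAlgebra k G) :
    Δ (a * b) = Δ a * Δ b :=
  map_mul_of_map_of_mul Δ (fun g h => by
    rw [hΔ, hΔ, hΔ, Algebra.TensorProduct.tmul_mul_tmul, map_mul]) a b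

theorem map_mul_rev_of_map_of_eq_inv (S : MonoidAlgebra k G →ₗ[k] MonoidAlgebra k G)
    (hS : ∀ g : G, S (of k G g) = of k G g⁻¹) (a b : MonoidAlgebra k G) :
    S (a * b) = S b * S a :=
  MulOpposite.op_injective <|
    map_mul_of_map_of_mul ((MulOpposite.opLinearEquiv k).toLinearMap ∘ₗ S)
      (fun g h => by
        simp only [LinearMap.comp_apply, LinearEquiv.coe_coe, MulOpposite.coe_opLinearEquiv, hS]
        rw [mul_inv_rev, map_mul, MulOpposite.op_mul]) a b

theorem braiding_smul_tmul_eq_map_braidingTensor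
    (Δ : MonoidAlgebra k G →ₐ[k] MonoidAlgebra k G ⊗[k] MonoidAlgebra k G)
    (hΔ : ∀ g : G, Δ (of k G g) = of k G g ⊗ₜ[k] of k G g)
    (S : MonoidAlgebra k G →ₗ[k] MonoidAlgebra k G) (hS : ∀ g : G, S (of k G g) = of k G g⁻¹)
    {V : Type*} [AddCommMonoid V] [Module k V] [Module (MonoidAlgebra k G) V]
    [IsScalarTower k (MonoidAlgebra k G) V] (Vx : G → Submodule k V)
    (hcompat : ∀ g x : G, ∀ v ∈ Vx x, of k G g • v ∈ Vx (g * x * g⁻¹))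
    (c : V ⊗[k] V →ₗ[k] V ⊗[k] V)
    (hc : ∀ g : G, ∀ u ∈ Vx g, ∀ v : V, c (u ⊗ₜ[k] v) = (of k G g • v) ⊗ₜ[k] u)
    {h : G} {w : V} (hw : w ∈ Vx h) (v : V) (x : MonoidAlgebra k G) :
    c ((x • w) ⊗ₜ[k] v) = TensorProduct.map (LinearMap.id.smulRight v)
      (LinearMap.id.smulRight w) (braidingTensor Δ S (of k G h) (Δ x)) := by
  induction x using MonoidAlgebra.induction_on with
  | of g =>
    rw [hc _ _ (hcompat g h w hw), hΔ, braidingTensor_tmul, hΔ, hS,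
      Algebra.TensorProduct.tmul_mul_tmul, TensorProduct.map_tmul]
    simp [map_mul, mul_assoc]
  | add x y hx hy => simp only [add_smul, TensorProduct.add_tmul, map_add, hx, hy]
  | smul r x hx =>
    rw [smul_assoc, ← TensorProduct.smul_tmul' r (x • w) v, map_smul, hx, map_smul, map_smul,
      map_smul]

end MonoidAlgebra

theorem stmt15_general {k : Type*} [Field k] {G : Type*} [Group G] [DecidableEq G]
    -- the structure maps of the Hopf algebra kG
    (Δ : MonoidAlgebra k G →ₗ[k] MonoidAlgebra k G ⊗[k] MonoidAlgebra k G)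
    (hΔ : ∀ g : G, Δ (MonoidAlgebra.of k G g) =
      MonoidAlgebra.of k G g ⊗ₜ[k] MonoidAlgebra.of k G g)
    (S : MonoidAlgebra k G →ₗ[k] MonoidAlgebra k G)
    (hS : ∀ g : G, S (MonoidAlgebra.of k G g) = MonoidAlgebra.of k G g⁻¹)
    -- J is a nilpotent Hopf ideal of kG
    (J : Submodule k (MonoidAlgebra k G))
    (hJ2 : ∀ x ∈ J, ∀ a : MonoidAlgebra k G, a * x ∈ J ∧ x * a ∈ J)
    (hJΔ : ∀ x ∈ J, Δ x ∈ subTensor15 J ⊤ ⊔ subTensor15 ⊤ J)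
    (hJS : ∀ x ∈ J, S x ∈ J)
    (hJnil : ∃ n : ℕ, 1 ≤ n ∧ J ^ n = ⊥)
    -- V is a Yetter--Drinfeld module over kG with braiding c
    {V : Type*} [AddCommGroup V] [Module k V] [Module (MonoidAlgebra k G) V]
    [IsScalarTower k (MonoidAlgebra k G) V]
    (Vx : G → Submodule k V)
    (hgrad : DirectSum.IsInternal Vx)
    (hcompat : ∀ g x : G, ∀ v ∈ Vx x, MonoidAlgebra.of k G g • v ∈ Vx (g * x * g⁻¹))
    (c : V ⊗[k] V →ₗ[k] V ⊗[k] V)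
    (hc : ∀ g : G, ∀ u ∈ Vx g, ∀ v : V,
      c (u ⊗ₜ[k] v) = (MonoidAlgebra.of k G g • v) ⊗ₜ[k] u) :
    subSMul15 (V := V) (J ^ 0) = ⊤ ∧
    (Antitone fun i : ℕ => subSMul15 (V := V) (J ^ i)) ∧
    (⨅ i : ℕ, subSMul15 (V := V) (J ^ i)) = ⊥ ∧
    (∀ i j : ℕ,
      Submodule.map c
          (subTensor15 (subSMul15 (V := V) (J ^ i)) (subSMul15 (V := V) (J ^ j))) ≤
        ⨆ (kl : ℕ × ℕ) (_ : i + j ≤ kl.1 + kl.2),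
          subTensor15 (subSMul15 (V := V) (J ^ kl.1)) (subSMul15 (V := V) (J ^ kl.2))) := by
  obtain ⟨n, -, hn⟩ := hJnil
  let ΔA := AlgHom.ofLinearMap Δ (by rw [← map_one (MonoidAlgebra.of k G), hΔ, map_one]; rfl)
    (MonoidAlgebra.map_mul_of_map_of_eq_tmul Δ hΔ)
  have hS_mul := MonoidAlgebra.map_mul_rev_of_map_of_eq_inv S hS
  simp only [← subSMul15_idealPow J]
  refine ⟨subSMul15_eq_top_of_one_mem Submodule.mem_top,
    fun i j hij => subSMul15_mono (idealPow_antitone hJ2 hij), ?_, fun i j => ?_⟩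
  · refine eq_bot_iff.2 <| (iInf_le _ n).trans ?_
    rw [subSMul15_idealPow, hn, subSMul15_bot]
  refine map_subTensor15_le c fun u hu v hv => ?_
  show (c ∘ₗ (TensorProduct.mk k V V).flip v) u ∈ _
  refine Submodule.mem_comap.1 <| subSMul15_le_comap_of_iSup_eq_top
    hgrad.submodule_iSup_eq_top _ (fun x hx h w hw => ?_) hu
  have hΔx := map_idealPow_le_tensorFiltration hJ2 (Δ := ΔA) hJΔ i (Submodule.mem_map_of_mem hx)
  have hbraid := map_braidingTensor_le hJ2 (Δ := ΔA) hJΔ hS_mul hJS (MonoidAlgebra.of k G h) i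
    (Submodule.mem_map_of_mem hΔx)
  simp only [LinearMap.comp_apply, LinearMap.flip_apply, TensorProduct.mk_apply]
  rw [MonoidAlgebra.braiding_smul_tmul_eq_map_braidingTensor ΔA hΔ S hS Vx hcompat c hc hw v x]
  exact map_smul_tensorFiltration_le hJ2 hv w (Submodule.mem_map_of_mem hbraid)

/-- Let `k` be a field, `G` a group, `J ⊆ kG` a nilpotent Hopf ideal of the group
algebra, and `V` a Yetter–Drinfeld module over `kG` with braiding `c`. Then `(J^iV)_{i≥0}` is a
decreasing filtration of the braided vector space `(V, c)`: `J^0V = V`, `J^iV ⊇ J^jV` for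
`i ≤ j`, `∩ J^iV = 0`, and `c(J^iV ⊗ J^jV) ⊆ Σ_{k+l ≥ i+j} J^kV ⊗ J^lV`. -/
theorem stmt15 {k : Type*} [Field k] {G : Type*} [Group G] [DecidableEq G]
    -- the structure maps of the Hopf algebra kG
    (Δ : MonoidAlgebra k G →ₗ[k] MonoidAlgebra k G ⊗[k] MonoidAlgebra k G)
    (hΔ : ∀ g : G, Δ (MonoidAlgebra.of k G g) =
      MonoidAlgebra.of k G g ⊗ₜ[k] MonoidAlgebra.of k G g)
    (ε : MonoidAlgebra k G →ₗ[k] k)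
    (hε : ∀ g : G, ε (MonoidAlgebra.of k G g) = 1)
    (S : MonoidAlgebra k G →ₗ[k] MonoidAlgebra k G)
    (hS : ∀ g : G, S (MonoidAlgebra.of k G g) = MonoidAlgebra.of k G g⁻¹)
    -- J is a nilpotent Hopf ideal of kG
    (J : Submodule k (MonoidAlgebra k G))
    (hJ2 : ∀ x ∈ J, ∀ a : MonoidAlgebra k G, a * x ∈ J ∧ x * a ∈ J)
    (hJΔ : ∀ x ∈ J, Δ x ∈ subTensor15 J ⊤ ⊔ subTensor15 ⊤ J)
    (hJε : ∀ x ∈ J, ε x = 0)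
    (hJS : ∀ x ∈ J, S x ∈ J)
    (hJnil : ∃ n : ℕ, 1 ≤ n ∧ J ^ n = ⊥)
    -- V is a Yetter--Drinfeld module over kG with braiding c
    {V : Type*} [AddCommGroup V] [Module k V] [Module (MonoidAlgebra k G) V]
    [IsScalarTower k (MonoidAlgebra k G) V]
    (Vx : G → Submodule k V)
    (hgrad : DirectSum.IsInternal Vx)
    (hcompat : ∀ g x : G, ∀ v ∈ Vx x, MonoidAlgebra.of k G g • v ∈ Vx (g * x * g⁻¹))
    (c : V ⊗[k] V →ₗ[k] V ⊗[k] V)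
    (hc : ∀ g : G, ∀ u ∈ Vx g, ∀ v : V,
      c (u ⊗ₜ[k] v) = (MonoidAlgebra.of k G g • v) ⊗ₜ[k] u) :
    subSMul15 (V := V) (J ^ 0) = ⊤ ∧
    (Antitone fun i : ℕ => subSMul15 (V := V) (J ^ i)) ∧
    (⨅ i : ℕ, subSMul15 (V := V) (J ^ i)) = ⊥ ∧
    (∀ i j : ℕ,
      Submodule.map c
          (subTensor15 (subSMul15 (V := V) (J ^ i)) (subSMul15 (V := V) (J ^ j))) ≤
        ⨆ (kl : ℕ × ℕ) (_ : i + j ≤ kl.1 + kl.2),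
          subTensor15 (subSMul15 (V := V) (J ^ kl.1)) (subSMul15 (V := V) (J ^ kl.2))) :=
  stmt15_general Δ hΔ S hS J hJ2 hJΔ hJS hJnil Vx hgrad hcompat c hc
end
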